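/- arXiv:1402.0084 — 5 statements merged into one kernel-verified Lean document; each statement's English description precedes it below -/
import Mathlib

section
/- Let T > 0, a, b, k > 0, and let f : [0,T] → ℝ be a non-negative integrable function satisfying f(t) ≤ a + b·k·∫₀ᵗ f(s)/√(t−s) ds for all 0 ≤ t ≤ T. Then for all 0 ≤ t ≤ T, f(t) ≤ a + 2·a·b·k·√t + π·b²·k²·∫₀ᵗ f(l) dl. -/
/-!
Substitute the inequality into itself: writing `I t = ∫₀ᵗ f s / √(t - s) ds`, bound `f s` inside
`I t` by `a + b k I s`. Then `∫₀ᵗ (t - s)^(-1/2) ds = 2√t`, and after exchanging the two integrals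
the inner one is `∫ₗᵗ ((t - s)(s - l))^(-1/2) ds = π` (an arcsine), so `I t ≤ 2a√t + b k π ∫₀ᵗ f`.
The computation is done with lower Lebesgue integrals, where Tonelli needs no integrability.
-/

open MeasureTheory Set Real
open scoped ENNReal

/-- Vanishes for `x ≤ 0` (there `√x = 0` and `0⁻¹ = 0`), so the kernel integrals below may run over
any interval containing the support. -/
noncomputable def invSqrtKernel (x : ℝ) : ℝ≥0∞ := ENNReal.ofReal (√x)⁻¹

lemma invSqrtKernel_of_nonpos {x : ℝ} (hx : x ≤ 0) : invSqrtKernel x = 0 := by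
  simp [invSqrtKernel, sqrt_eq_zero_of_nonpos hx]

@[fun_prop]
lemma measurable_invSqrtKernel : Measurable invSqrtKernel := by
  unfold invSqrtKernel; fun_prop

lemma invSqrtKernel_ne_top (x : ℝ) : invSqrtKernel x ≠ ∞ := ENNReal.ofReal_ne_top

lemma lintegral_Ioo_ofReal_deriv_of_nonneg {g g' : ℝ → ℝ} {a b : ℝ} (hab : a ≤ b)
    (hcont : ContinuousOn g (Icc a b)) (hderiv : ∀ x ∈ Ioo a b, HasDerivAt g (g' x) x)
    (hpos : ∀ x ∈ Ioo a b, 0 ≤ g' x) :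
    ∫⁻ x in Ioo a b, ENNReal.ofReal (g' x) = ENNReal.ofReal (g b - g a) := by
  have hint : IntegrableOn g' (Ioc a b) :=
    intervalIntegral.integrableOn_deriv_of_nonneg hcont hderiv hpos
  rw [← ofReal_integral_eq_lintegral_ofReal (hint.mono_set Ioo_subset_Ioc_self)
    ((ae_restrict_iff' measurableSet_Ioo).2 (ae_of_all _ hpos)), ← integral_Ioc_eq_integral_Ioo,
    ← intervalIntegral.integral_of_le hab, intervalIntegral.integral_eq_sub_of_hasDerivAt_of_le
    hab hcont hderiv ((intervalIntegrable_iff_integrableOn_Ioc_of_le hab).2 hint)]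

lemma lintegral_invSqrtKernel_sub {c t : ℝ} (hct : c ≤ t) :
    ∫⁻ s in Ioc c t, invSqrtKernel (t - s) = ENNReal.ofReal (2 * √(t - c)) := by
  have hderiv : ∀ s ∈ Ioo c t, HasDerivAt (fun s ↦ -(2 * √(t - s))) (√(t - s))⁻¹ s := by
    intro s hs
    have hts : 0 < t - s := sub_pos.2 hs.2
    refine ((((hasDerivAt_id' s).const_sub t).sqrt hts.ne').const_mul 2).neg.congr_deriv ?_
    field_simp
  rw [← Measure.restrict_congr_set Ioo_ae_eq_Ioc]
  unfold invSqrtKernel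
  rw [lintegral_Ioo_ofReal_deriv_of_nonneg hct (by fun_prop) hderiv
      (fun s _ ↦ inv_nonneg.2 (sqrt_nonneg _))]
  simp

lemma hasDerivAt_arcsin_affine {l t s : ℝ} (hs : s ∈ Ioo l t) :
    HasDerivAt (fun s ↦ arcsin ((2 * s - l - t) / (t - l))) ((√(s - l))⁻¹ * (√(t - s))⁻¹) s := by
  have hsl : 0 < s - l := sub_pos.2 hs.1
  have hts : 0 < t - s := sub_pos.2 hs.2
  have htl : 0 < t - l := by linarith
  have hroot : √(1 - ((2 * s - l - t) / (t - l)) ^ 2) = 2 * √(s - l) * √(t - s) / (t - l) := by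
    rw [← sqrt_sq (by positivity : 0 ≤ 2 * √(s - l) * √(t - s) / (t - l))]
    congr 1
    rw [div_pow (2 * √(s - l) * √(t - s)), mul_pow, mul_pow, sq_sqrt hsl.le, sq_sqrt hts.le]
    field_simp
    ring
  have hu : HasDerivAt (fun s ↦ (2 * s - l - t) / (t - l)) (2 / (t - l)) s := by
    simpa using ((((hasDerivAt_id' s).const_mul 2).sub_const l).sub_const t).div_const (t - l)
  have hne : (2 * s - l - t) / (t - l) ≠ -1 := by
    rw [ne_eq, div_eq_iff htl.ne']; linarith
  have hne' : (2 * s - l - t) / (t - l) ≠ 1 := by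
    rw [ne_eq, div_eq_iff htl.ne']; linarith
  refine ((hasDerivAt_arcsin hne hne').comp s hu).congr_deriv ?_
  rw [hroot]
  field_simp

lemma support_invSqrtKernel_mul_subset (l t : ℝ) :
    (fun s ↦ invSqrtKernel (s - l) * invSqrtKernel (t - s)).support ⊆ Ioo l t := by
  refine Function.support_subset_iff'.2 fun s hs ↦ ?_
  rcases le_or_gt s l with h | h
  · simp [invSqrtKernel_of_nonpos (sub_nonpos.2 h)]
  · simp [invSqrtKernel_of_nonpos (sub_nonpos.2 (not_lt.1 fun h' ↦ hs ⟨h, h'⟩))]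

lemma lintegral_invSqrtKernel_mul_invSqrtKernel {l t : ℝ} (hlt : l < t) :
    ∫⁻ s, invSqrtKernel (s - l) * invSqrtKernel (t - s) = ENNReal.ofReal π := by
  rw [← setLIntegral_eq_of_support_subset (support_invSqrtKernel_mul_subset l t)]
  simp_rw [invSqrtKernel, ← ENNReal.ofReal_mul (inv_nonneg.2 (sqrt_nonneg _))]
  rw [lintegral_Ioo_ofReal_deriv_of_nonneg hlt.le (by fun_prop)
    (fun s hs ↦ hasDerivAt_arcsin_affine hs) (fun s _ ↦ by positivity)]
  have htl : t - l ≠ 0 := (sub_pos.2 hlt).ne'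
  rw [show (2 * t - l - t) / (t - l) = 1 by field_simp; ring,
    show (2 * l - l - t) / (t - l) = -1 by field_simp; ring, arcsin_one, arcsin_neg_one]
  ring_nf

lemma lintegral_lintegral_invSqrtKernel {F : ℝ → ℝ≥0∞} {c t : ℝ}
    (hF : AEMeasurable F (volume.restrict (Ioc c t))) :
    ∫⁻ s in Ioc c t, (∫⁻ l in Ioc c t, F l * invSqrtKernel (s - l)) * invSqrtKernel (t - s)
      = ENNReal.ofReal π * ∫⁻ l in Ioc c t, F l := by
  have hmeas : AEMeasurable (Function.uncurry fun s l ↦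
      F l * invSqrtKernel (s - l) * invSqrtKernel (t - s))
      ((volume.restrict (Ioc c t)).prod (volume.restrict (Ioc c t))) := by
    refine (hF.comp_snd.mul ?_).mul ?_ <;> apply Measurable.aemeasurable <;> fun_prop
  have hinner : ∀ᵐ l ∂volume.restrict (Ioc c t),
      ∫⁻ s in Ioc c t, F l * invSqrtKernel (s - l) * invSqrtKernel (t - s)
        = ENNReal.ofReal π * F l := by
    rw [← Measure.restrict_congr_set Ioo_ae_eq_Ioc]
    filter_upwards [ae_restrict_mem measurableSet_Ioo] with l hl
    simp_rw [mul_assoc]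
    rw [lintegral_const_mul _ (by fun_prop), setLIntegral_eq_of_support_subset
      ((support_invSqrtKernel_mul_subset l t).trans (Ioo_subset_Ioo_left hl.1.le)),
      lintegral_invSqrtKernel_mul_invSqrtKernel hl.2, mul_comm]
  simp_rw [← lintegral_mul_const' _ _ (invSqrtKernel_ne_top _)]
  rw [lintegral_lintegral_swap hmeas, lintegral_congr_ae hinner, lintegral_const_mul' _ _
    ENNReal.ofReal_ne_top]

lemma ofReal_integral_le_lintegral_ofReal {α : Type*} [MeasurableSpace α] {μ : Measure α}
    {f : α → ℝ} (hf : 0 ≤ᵐ[μ] f) :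
    ENNReal.ofReal (∫ x, f x ∂μ) ≤ ∫⁻ x, ENNReal.ofReal (f x) ∂μ := by
  by_cases hfi : Integrable f μ
  · exact (ofReal_integral_eq_lintegral_ofReal hfi hf).le
  · simp [integral_undef hfi]

lemma ofReal_integral_div_sqrt_le {f : ℝ → ℝ} {c s : ℝ} (hcs : c ≤ s)
    (hf : ∀ l ∈ Ioc c s, 0 ≤ f l) :
    ENNReal.ofReal (∫ l in c..s, f l / √(s - l))
      ≤ ∫⁻ l in Ioc c s, ENNReal.ofReal (f l) * invSqrtKernel (s - l) := by
  rw [intervalIntegral.integral_of_le hcs]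
  refine (ofReal_integral_le_lintegral_ofReal ?_).trans_eq ?_
  · exact (ae_restrict_iff' measurableSet_Ioc).2
      (ae_of_all _ fun l hl ↦ div_nonneg (hf l hl) (sqrt_nonneg _))
  · simp_rw [div_eq_mul_inv, invSqrtKernel, ENNReal.ofReal_mul' (inv_nonneg.2 (sqrt_nonneg _))]

lemma ofReal_le_add_mul_lintegral_of_le {f : ℝ → ℝ} {x A B c s : ℝ} (hB : 0 ≤ B) (hcs : c ≤ s)
    (hf : ∀ l ∈ Ioc c s, 0 ≤ f l) (hx : x ≤ A + B * ∫ l in c..s, f l / √(s - l)) :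
    ENNReal.ofReal x ≤ ENNReal.ofReal A
      + ENNReal.ofReal B * ∫⁻ l in Ioc c s, ENNReal.ofReal (f l) * invSqrtKernel (s - l) := by
  grw [hx, ENNReal.ofReal_add_le, ENNReal.ofReal_mul hB, ofReal_integral_div_sqrt_le hcs hf]

lemma lintegral_mul_invSqrtKernel_le_of_le {F : ℝ → ℝ≥0∞} {A B : ℝ≥0∞} {c t : ℝ}
    (hct : c ≤ t) (hA : A ≠ ∞) (hB : B ≠ ∞) (hF : AEMeasurable F (volume.restrict (Ioc c t)))
    (hle : ∀ s ∈ Ioc c t, F s ≤ A + B * ∫⁻ l in Ioc c s, F l * invSqrtKernel (s - l)) :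
    ∫⁻ s in Ioc c t, F s * invSqrtKernel (t - s)
      ≤ A * ENNReal.ofReal (2 * √(t - c)) + B * (ENNReal.ofReal π * ∫⁻ l in Ioc c t, F l) :=
  calc _ ≤ ∫⁻ s in Ioc c t, A * invSqrtKernel (t - s)
          + B * ((∫⁻ l in Ioc c t, F l * invSqrtKernel (s - l)) * invSqrtKernel (t - s)) :=
        setLIntegral_mono' measurableSet_Ioc fun s hs ↦ by
          grw [hle s hs, lintegral_mono_set (Ioc_subset_Ioc_right hs.2), add_mul, mul_assoc]
    _ = _ := by
        rw [lintegral_add_left (by fun_prop), lintegral_const_mul' _ _ hA,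
          lintegral_const_mul' _ _ hB, lintegral_invSqrtKernel_sub hct,
          lintegral_lintegral_invSqrtKernel hF]

theorem stmt_3_general (T a b k : ℝ) (ha : 0 < a) (hb : 0 < b) (hk : 0 < k)
    (f : ℝ → ℝ)
    (hint : IntegrableOn f (Set.Icc 0 T) volume)
    (hnonneg : ∀ t ∈ Set.Icc (0:ℝ) T, 0 ≤ f t)
    (hineq : ∀ t ∈ Set.Icc (0:ℝ) T,
      f t ≤ a + b * k * ∫ s in (0:ℝ)..t, f s / Real.sqrt (t - s)) :
    ∀ t ∈ Set.Icc (0:ℝ) T,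
      f t ≤ a + 2 * a * b * k * Real.sqrt t
        + Real.pi * b ^ 2 * k ^ 2 * ∫ l in (0:ℝ)..t, f l := by
  intro t ⟨ht0, htT⟩
  have hsub : ∀ {s}, s ≤ t → Ioc 0 s ⊆ Icc 0 T := fun hs ↦
    Ioc_subset_Icc_self.trans (Icc_subset_Icc_right (hs.trans htT))
  have hf : ∀ {s}, s ≤ t → ∀ l ∈ Ioc 0 s, 0 ≤ f l := fun hs l hl ↦ hnonneg l (hsub hs hl)
  have hbk : 0 ≤ b * k := by positivity
  have hG : 0 ≤ ∫ l in (0:ℝ)..t, f l := intervalIntegral.integral_nonneg ht0 fun l hl ↦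
    hnonneg l ⟨hl.1, hl.2.trans htT⟩
  have hI : ∫ s in (0:ℝ)..t, f s / √(t - s)
      ≤ a * (2 * √t) + b * k * (π * ∫ l in (0:ℝ)..t, f l) := by
    rw [← ENNReal.ofReal_le_ofReal_iff (by positivity)]
    calc _ ≤ ∫⁻ s in Ioc 0 t, ENNReal.ofReal (f s) * invSqrtKernel (t - s) :=
          ofReal_integral_div_sqrt_le ht0 (hf le_rfl)
      _ ≤ _ := lintegral_mul_invSqrtKernel_le_of_le ht0 ENNReal.ofReal_ne_top ENNReal.ofReal_ne_top
          (hint.mono_set (hsub le_rfl)).aemeasurable.ennreal_ofReal fun s hs ↦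
            ofReal_le_add_mul_lintegral_of_le hbk hs.1.le (hf hs.2)
              (hineq s (hsub hs.2 ⟨hs.1, le_rfl⟩))
      _ = _ := by
          rw [intervalIntegral.integral_of_le ht0, ← ofReal_integral_eq_lintegral_ofReal
            (hint.mono_set (hsub le_rfl)) ((ae_restrict_iff' measurableSet_Ioc).2
              (ae_of_all _ (hf le_rfl))), ← intervalIntegral.integral_of_le ht0, sub_zero,
            ← ENNReal.ofReal_mul pi_nonneg, ← ENNReal.ofReal_mul hbk, ← ENNReal.ofReal_mul ha.le,
            ← ENNReal.ofReal_add (by positivity) (by positivity)]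
  calc f t ≤ a + b * k * ∫ s in (0:ℝ)..t, f s / √(t - s) := hineq t ⟨ht0, htT⟩
    _ ≤ a + b * k * (a * (2 * √t) + b * k * (π * ∫ l in (0:ℝ)..t, f l)) := by grw [hI]
    _ = _ := by ring

theorem stmt_3 (T a b k : ℝ) (hT : 0 < T) (ha : 0 < a) (hb : 0 < b) (hk : 0 < k)
    (f : ℝ → ℝ)
    (hint : IntegrableOn f (Set.Icc 0 T) volume)
    (hnonneg : ∀ t ∈ Set.Icc (0:ℝ) T, 0 ≤ f t)
    (hineq : ∀ t ∈ Set.Icc (0:ℝ) T,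
      f t ≤ a + b * k * ∫ s in (0:ℝ)..t, f s / Real.sqrt (t - s)) :
    ∀ t ∈ Set.Icc (0:ℝ) T,
      f t ≤ a + 2 * a * b * k * Real.sqrt t
        + Real.pi * b ^ 2 * k ^ 2 * ∫ l in (0:ℝ)..t, f l :=
  stmt_3_general T a b k ha hb hk f hint hnonneg hineq
end

section
/- Let T > 0, a, b, k > 0, and let f : [0,T] → ℝ be a non-negative integrable function satisfying f(t) ≤ a + b·k·∫₀ᵗ f(s)/√(t−s) ds for all 0 ≤ t ≤ T. Then for all 0 ≤ t ≤ T, f(t) ≤ (a + 2·a·b·k·√T)·exp(π·b²·k²·t). -/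
/-!
Substituting the hypothesis into itself and exchanging the order of integration replaces the
Abel kernel `(t - s)^(-1/2)` by its self-convolution `∫ s in u..t, ((s - u) (t - s))^(-1/2) = π`;
together with `∫ s in 0..t, (t - s)^(-1/2) = 2 √t` this gives
`f t ≤ a + 2 a b k √T + π b² k² ∫ s in 0..t, f s`, and Grönwall's inequality finishes.
The iteration is done with `ℝ≥0∞`-valued lower integrals: there Tonelli applies
unconditionally, whereas a divergent Bochner integral `∫ f s / √(t - s)` would silently be `0`.
-/

open MeasureTheory Set Real Topology
open scoped ENNReal

theorem lintegral_ofReal_deriv_eq_sub {g g' : ℝ → ℝ} {a b : ℝ} (hab : a ≤ b)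
    (hcont : ContinuousOn g (Icc a b)) (hderiv : ∀ x ∈ Ioo a b, HasDerivAt g (g' x) x)
    (hpos : ∀ x ∈ Ioo a b, 0 ≤ g' x) :
    ∫⁻ x in Ioc a b, ENNReal.ofReal (g' x) = ENNReal.ofReal (g b - g a) := by
  have hint := intervalIntegral.integrableOn_deriv_of_nonneg hcont hderiv hpos
  rw [← intervalIntegral.integral_eq_sub_of_hasDerivAt_of_le hab hcont hderiv
      ((intervalIntegrable_iff_integrableOn_Ioc_of_le hab).2 hint),
    intervalIntegral.integral_of_le hab, ofReal_integral_eq_lintegral_ofReal hint]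
  rw [Measure.restrict_congr_set Ioo_ae_eq_Ioc.symm]
  exact (ae_restrict_iff' measurableSet_Ioo).2 (ae_of_all _ hpos)

theorem lintegral_ofReal_inv_sqrt_mul_inv_sqrt {u t : ℝ} (hut : u < t) :
    ∫⁻ s in Ioc u t, ENNReal.ofReal ((√(s - u))⁻¹ * (√(t - s))⁻¹) = ENNReal.ofReal π := by
  have htu : 0 < t - u := sub_pos.2 hut
  set x : ℝ → ℝ := fun s => (2 * s - (u + t)) / (t - u)
  have hderiv : ∀ s ∈ Ioo u t,
      HasDerivAt (fun s => arcsin (x s)) ((√(s - u))⁻¹ * (√(t - s))⁻¹) s := by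
    intro s hs
    have hsu : 0 < s - u := sub_pos.2 hs.1
    have hts : 0 < t - s := sub_pos.2 hs.2
    have hx : HasDerivAt x (2 / (t - u)) s := by
      simpa using (((hasDerivAt_id s).const_mul 2).sub_const (u + t)).div_const (t - u)
    have h1 : -1 < x s := by simp only [x]; rw [lt_div_iff₀ htu]; linarith
    have h2 : x s < 1 := by simp only [x]; rw [div_lt_iff₀ htu]; linarith
    have hsqrt : √(1 - x s ^ 2) = 2 * √(s - u) * √(t - s) / (t - u) := by
      rw [← sqrt_sq (by positivity : 0 ≤ 2 * √(s - u) * √(t - s) / (t - u))]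
      congr 1
      simp only [x, div_pow, mul_pow, sq_sqrt hsu.le, sq_sqrt hts.le]
      field_simp
      ring
    refine ((hasDerivAt_arcsin h1.ne' h2.ne).comp s hx).congr_deriv ?_
    rw [hsqrt]
    have : √(s - u) ≠ 0 := (sqrt_pos.2 hsu).ne'
    have : √(t - s) ≠ 0 := (sqrt_pos.2 hts).ne'
    field_simp
  rw [lintegral_ofReal_deriv_eq_sub hut.le (by fun_prop) hderiv (fun s _ => by positivity)]
  have hxt : x t = 1 := by simp only [x]; rw [div_eq_one_iff_eq htu.ne']; ring
  have hxu : x u = -1 := by simp only [x]; rw [div_eq_iff htu.ne']; ring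
  simp only [hxt, hxu, arcsin_one, arcsin_neg_one]
  ring_nf

-- `√` of a nonpositive number is `0`, so `abelKernel t s = 0` for `s ≥ t`.
noncomputable def abelKernel (t s : ℝ) : ℝ≥0∞ := ENNReal.ofReal (√(t - s))⁻¹

theorem abelKernel_eq_zero_of_le {t s : ℝ} (h : t ≤ s) : abelKernel t s = 0 := by
  simp [abelKernel, sqrt_eq_zero'.2 (sub_nonpos.2 h)]

theorem abelKernel_ne_top (t s : ℝ) : abelKernel t s ≠ ∞ := ENNReal.ofReal_ne_top

theorem measurable_abelKernel : Measurable (Function.uncurry abelKernel) := by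
  unfold abelKernel Function.uncurry
  fun_prop

theorem lintegral_abelKernel {c t : ℝ} (hct : c ≤ t) :
    ∫⁻ s in Ioc c t, abelKernel t s = ENNReal.ofReal (2 * √(t - c)) := by
  have hderiv : ∀ s ∈ Ioo c t, HasDerivAt (fun s => -2 * √(t - s)) (√(t - s))⁻¹ s := by
    intro s hs
    have hts : t - s ≠ 0 := (sub_pos.2 hs.2).ne'
    refine (((hasDerivAt_id' s).const_sub t).sqrt hts |>.const_mul (-2)).congr_deriv ?_
    have : √(t - s) ≠ 0 := (sqrt_pos.2 (sub_pos.2 hs.2)).ne'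
    field_simp
  unfold abelKernel
  rw [lintegral_ofReal_deriv_eq_sub hct (by fun_prop) hderiv
    (fun s _ => inv_nonneg.2 (sqrt_nonneg _))]
  simp

theorem lintegral_abelKernel_mul_abelKernel {c u t : ℝ} (hcu : c ≤ u) (hut : u < t) :
    ∫⁻ s in Ioc c t, abelKernel s u * abelKernel t s = ENNReal.ofReal π := by
  rw [← Ioc_union_Ioc_eq_Ioc hcu hut.le, lintegral_union measurableSet_Ioc
      (Ioc_disjoint_Ioc_of_le le_rfl),
    setLIntegral_congr_fun (g := fun _ => 0) measurableSet_Ioc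
      (fun s hs => by simp [abelKernel_eq_zero_of_le hs.2]),
    lintegral_zero, zero_add, ← lintegral_ofReal_inv_sqrt_mul_inv_sqrt hut]
  exact lintegral_congr fun s => (ENNReal.ofReal_mul (by positivity)).symm

theorem setLIntegral_mul_abelKernel_of_le (F : ℝ → ℝ≥0∞) {c s t : ℝ} (hcs : c ≤ s)
    (hst : s ≤ t) :
    ∫⁻ u in Ioc c s, F u * abelKernel s u = ∫⁻ u in Ioc c t, F u * abelKernel s u := by
  rw [← Ioc_union_Ioc_eq_Ioc hcs hst, lintegral_union measurableSet_Ioc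
      (Ioc_disjoint_Ioc_of_le le_rfl),
    setLIntegral_congr_fun (s := Ioc s t) (g := fun _ => 0) measurableSet_Ioc
      (fun u hu => by simp [abelKernel_eq_zero_of_le hu.1.le]),
    lintegral_zero, add_zero]

theorem lintegral_lintegral_mul_abelKernel {F : ℝ → ℝ≥0∞} {c t : ℝ}
    (hF : AEMeasurable F (volume.restrict (Ioc c t))) :
    ∫⁻ s in Ioc c t, (∫⁻ u in Ioc c s, F u * abelKernel s u) * abelKernel t s
      = ENNReal.ofReal π * ∫⁻ u in Ioc c t, F u := by
  have hIoo : ∀ᵐ u ∂volume.restrict (Ioc c t), u ∈ Ioo c t := by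
    rw [← Measure.restrict_congr_set Ioo_ae_eq_Ioc]
    exact ae_restrict_mem measurableSet_Ioo
  calc ∫⁻ s in Ioc c t, (∫⁻ u in Ioc c s, F u * abelKernel s u) * abelKernel t s
      = ∫⁻ s in Ioc c t, ∫⁻ u in Ioc c t, F u * abelKernel s u * abelKernel t s := by
        refine setLIntegral_congr_fun measurableSet_Ioc fun s hs => ?_
        rw [setLIntegral_mul_abelKernel_of_le F hs.1.le hs.2,
          lintegral_mul_const' _ _ (abelKernel_ne_top t s)]
    _ = ∫⁻ u in Ioc c t, ∫⁻ s in Ioc c t, F u * abelKernel s u * abelKernel t s := by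
        refine lintegral_lintegral_swap ((hF.comp_snd.mul ?_).mul ?_)
        · exact measurable_abelKernel.aemeasurable
        · exact (measurable_abelKernel.comp (measurable_const.prodMk measurable_fst)).aemeasurable
    _ = ∫⁻ u in Ioc c t, F u * ENNReal.ofReal π := by
        refine lintegral_congr_ae (hIoo.mono fun u hu => ?_)
        simp_rw [mul_assoc]
        rw [lintegral_const_mul (F u) (f := fun s => abelKernel s u * abelKernel t s)
            (by unfold abelKernel; fun_prop),
          lintegral_abelKernel_mul_abelKernel hu.1.le hu.2]
    _ = ENNReal.ofReal π * ∫⁻ u in Ioc c t, F u := by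
        rw [lintegral_mul_const' _ _ ENNReal.ofReal_ne_top, mul_comm]

theorem lintegral_mul_abelKernel_le {F : ℝ → ℝ≥0∞} {A B : ℝ≥0∞} {c t : ℝ} (hct : c ≤ t)
    (hF : AEMeasurable F (volume.restrict (Ioc c t))) (hB : B ≠ ∞)
    (hle : ∀ᵐ s ∂volume.restrict (Ioc c t),
      F s ≤ A + B * ∫⁻ u in Ioc c s, F u * abelKernel s u) :
    ∫⁻ s in Ioc c t, F s * abelKernel t s
      ≤ A * ENNReal.ofReal (2 * √(t - c)) + B * (ENNReal.ofReal π * ∫⁻ u in Ioc c t, F u) := by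
  calc ∫⁻ s in Ioc c t, F s * abelKernel t s
      ≤ ∫⁻ s in Ioc c t, (A * abelKernel t s
          + B * ((∫⁻ u in Ioc c s, F u * abelKernel s u) * abelKernel t s)) :=
        lintegral_mono_ae <| hle.mono fun s hs => by
          rw [← mul_assoc, ← add_mul]
          exact mul_le_mul_left hs _
    _ = A * ENNReal.ofReal (2 * √(t - c)) + B * (ENNReal.ofReal π * ∫⁻ u in Ioc c t, F u) := by
        rw [lintegral_add_left (by unfold abelKernel; fun_prop), lintegral_const_mul' _ _ hB,
          lintegral_const_mul _ (by unfold abelKernel; fun_prop), lintegral_abelKernel hct,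
          lintegral_lintegral_mul_abelKernel hF]

theorem intervalIntegral_div_sqrt_eq_toReal_lintegral {f : ℝ → ℝ} {c s : ℝ} (hcs : c ≤ s)
    (hf : AEStronglyMeasurable f (volume.restrict (Ioc c s))) (hf0 : ∀ u ∈ Ioc c s, 0 ≤ f u) :
    ∫ u in c..s, f u / √(s - u)
      = (∫⁻ u in Ioc c s, ENNReal.ofReal (f u) * abelKernel s u).toReal := by
  rw [intervalIntegral.integral_of_le hcs, integral_eq_lintegral_of_nonneg_ae]
  · congr 1
    refine setLIntegral_congr_fun measurableSet_Ioc fun u hu => ?_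
    rw [div_eq_mul_inv, ENNReal.ofReal_mul (hf0 u hu), abelKernel]
  · filter_upwards [ae_restrict_mem measurableSet_Ioc] with u hu
    exact div_nonneg (hf0 u hu) (sqrt_nonneg _)
  · simp only [div_eq_mul_inv]
    exact hf.mul (by fun_prop)

theorem le_add_mul_integral_of_le_add_mul_integral_div_sqrt {f : ℝ → ℝ} {A B c t : ℝ}
    (hA : 0 ≤ A) (hB : 0 ≤ B) (hct : c ≤ t) (hf : IntegrableOn f (Icc c t))
    (hf0 : ∀ s ∈ Icc c t, 0 ≤ f s)
    (hle : ∀ s ∈ Icc c t, f s ≤ A + B * ∫ u in c..s, f u / √(s - u)) :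
    f t ≤ A + 2 * A * B * √(t - c) + π * B ^ 2 * ∫ u in c..t, f u := by
  set F : ℝ → ℝ≥0∞ := fun u => ENNReal.ofReal (f u)
  set Λ : ℝ → ℝ≥0∞ := fun s => ∫⁻ u in Ioc c s, F u * abelKernel s u
  have hsub : ∀ s ∈ Icc c t, Ioc c s ⊆ Icc c t := fun s hs =>
    Ioc_subset_Icc_self.trans (Icc_subset_Icc_right hs.2)
  have hΛ_eq : ∀ s ∈ Icc c t, ∫ u in c..s, f u / √(s - u) = (Λ s).toReal := fun s hs =>
    intervalIntegral_div_sqrt_eq_toReal_lintegral hs.1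
      (hf.mono_set (hsub s hs)).aestronglyMeasurable fun u hu => hf0 u (hsub s hs hu)
  have hF_le : ∀ s ∈ Icc c t, F s ≤ ENNReal.ofReal A + ENNReal.ofReal B * Λ s := by
    intro s hs
    calc F s ≤ ENNReal.ofReal (A + B * (Λ s).toReal) :=
          ENNReal.ofReal_le_ofReal (hΛ_eq s hs ▸ hle s hs)
      _ ≤ ENNReal.ofReal A + ENNReal.ofReal B * Λ s := by
          rw [ENNReal.ofReal_add hA (by positivity), ENNReal.ofReal_mul hB]
          gcongr
          exact ENNReal.ofReal_toReal_le
  have hf_Ioc : IntegrableOn f (Ioc c t) := hf.mono_set Ioc_subset_Icc_self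
  have hI : ∫⁻ u in Ioc c t, F u = ENNReal.ofReal (∫ u in c..t, f u) := by
    rw [intervalIntegral.integral_of_le hct, ofReal_integral_eq_lintegral_ofReal hf_Ioc]
    filter_upwards [ae_restrict_mem measurableSet_Ioc] with u hu
    exact hf0 u (Ioc_subset_Icc_self hu)
  have hI0 : 0 ≤ ∫ u in c..t, f u := intervalIntegral.integral_nonneg hct hf0
  have hΛ_le : Λ t ≤ ENNReal.ofReal (A * (2 * √(t - c)) + B * (π * ∫ u in c..t, f u)) := by
    have := lintegral_mul_abelKernel_le hct hf_Ioc.aemeasurable.ennreal_ofReal ENNReal.ofReal_ne_top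
      ((ae_restrict_mem measurableSet_Ioc).mono fun s hs => hF_le s ⟨hs.1.le, hs.2⟩)
    rwa [hI, ← ENNReal.ofReal_mul pi_pos.le, ← ENNReal.ofReal_mul hB, ← ENNReal.ofReal_mul hA,
      ← ENNReal.ofReal_add (by positivity) (by positivity)] at this
  calc f t ≤ A + B * (Λ t).toReal := hΛ_eq t ⟨hct, le_rfl⟩ ▸ hle t ⟨hct, le_rfl⟩
    _ ≤ A + B * (A * (2 * √(t - c)) + B * (π * ∫ u in c..t, f u)) := by
        gcongr
        exact ENNReal.toReal_le_of_le_ofReal (by positivity) hΛ_le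
    _ = A + 2 * A * B * √(t - c) + π * B ^ 2 * ∫ u in c..t, f u := by ring

theorem ContinuousOn.le_mul_exp_of_le_add_mul_integral {φ : ℝ → ℝ} {M C a b : ℝ} (hC : 0 ≤ C)
    (hφ : ContinuousOn φ (Icc a b)) (hle : ∀ x ∈ Icc a b, φ x ≤ M + C * ∫ s in a..x, φ s) :
    ∀ x ∈ Icc a b, φ x ≤ M * exp (C * (x - a)) := by
  intro x hx
  have hφ_int : IntervalIntegrable φ volume a b := hφ.intervalIntegrable_of_Icc (hx.1.trans hx.2)
  set z : ℝ → ℝ := fun x => M + C * ∫ s in a..x, φ s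
  have hz : ContinuousOn z (Icc a b) := by
    have := intervalIntegral.continuousOn_primitive_interval' hφ_int left_mem_uIcc
    exact (continuousOn_const.add (continuousOn_const.mul this)).mono Icc_subset_uIcc
  have hz' : ∀ x ∈ Ico a b, HasDerivWithinAt z (C * φ x) (Ici x) x := by
    intro x hx
    have hnhds : Icc a b ∈ 𝓝[>] x := Icc_mem_nhdsGT_of_mem hx
    refine ((intervalIntegral.integral_hasDerivWithinAt_right (t := Ioi x) ?_ ?_ ?_).const_mul C
      |>.const_add M)
    · exact hφ_int.mono_set (uIcc_subset_uIcc_left (Ico_subset_Icc_self hx |> Icc_subset_uIcc))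
    · exact ⟨_, hnhds, hφ.aestronglyMeasurable measurableSet_Icc⟩
    · exact (hφ x (Ico_subset_Icc_self hx)).mono_of_mem_nhdsWithin hnhds
  calc φ x ≤ z x := hle x hx
    _ ≤ gronwallBound M C 0 (x - a) :=
      le_gronwallBound_of_liminf_deriv_right_le hz
        (fun x hx _ hr => (hz' x hx).liminf_right_slope_le hr) (by simp [z])
        (fun x hx => by simpa using mul_le_mul_of_nonneg_left (hle x (Ico_subset_Icc_self hx)) hC)
        x hx
    _ = M * exp (C * (x - a)) := gronwallBound_ε0 _ _ _

theorem IntegrableOn.le_mul_exp_of_le_add_mul_integral {f : ℝ → ℝ} {M C a b : ℝ} (hC : 0 ≤ C)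
    (hf : IntegrableOn f (Icc a b)) (hle : ∀ x ∈ Icc a b, f x ≤ M + C * ∫ s in a..x, f s) :
    ∀ x ∈ Icc a b, f x ≤ M * exp (C * (x - a)) := by
  intro x hx
  have hab : a ≤ b := hx.1.trans hx.2
  set φ : ℝ → ℝ := fun x => M + C * ∫ s in a..x, f s
  have hφ : ContinuousOn φ (Icc a b) := by
    have := intervalIntegral.continuousOn_primitive_interval (hf.mono_set (uIcc_of_le hab).subset)
    rw [uIcc_of_le hab] at this
    exact continuousOn_const.add (continuousOn_const.mul this)
  have hφ_le : ∀ y ∈ Icc a b, φ y ≤ M + C * ∫ s in a..y, φ s := by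
    intro y hy
    have hsub : Icc a y ⊆ Icc a b := Icc_subset_Icc_right hy.2
    show M + C * ∫ s in a..y, f s ≤ _
    gcongr
    refine intervalIntegral.integral_mono_on hy.1 ?_ ((hφ.mono hsub).intervalIntegrable_of_Icc hy.1)
      fun s hs => hle s (hsub hs)
    exact (intervalIntegrable_iff_integrableOn_Icc_of_le hy.1).2 (hf.mono_set hsub)
  exact (hle x hx).trans (hφ.le_mul_exp_of_le_add_mul_integral hC hφ_le x hx)

theorem stmt_4_general (T a b k : ℝ) (ha : 0 < a) (hb : 0 < b) (hk : 0 < k)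
    (f : ℝ → ℝ)
    (hint : IntegrableOn f (Set.Icc 0 T) volume)
    (hnonneg : ∀ t ∈ Set.Icc (0:ℝ) T, 0 ≤ f t)
    (hineq : ∀ t ∈ Set.Icc (0:ℝ) T,
      f t ≤ a + b * k * ∫ s in (0:ℝ)..t, f s / Real.sqrt (t - s)) :
    ∀ t ∈ Set.Icc (0:ℝ) T,
      f t ≤ (a + 2 * a * b * k * Real.sqrt T) * Real.exp (Real.pi * b ^ 2 * k ^ 2 * t) := by
  have hbound : ∀ t ∈ Icc (0:ℝ) T,
      f t ≤ (a + 2 * a * b * k * √T) + π * b ^ 2 * k ^ 2 * ∫ s in (0:ℝ)..t, f s := by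
    intro t ht
    have hsub : Icc 0 t ⊆ Icc 0 T := Icc_subset_Icc_right ht.2
    calc f t ≤ a + 2 * a * (b * k) * √(t - 0) + π * (b * k) ^ 2 * ∫ s in (0:ℝ)..t, f s :=
          le_add_mul_integral_of_le_add_mul_integral_div_sqrt ha.le (by positivity) ht.1
            (hint.mono_set hsub) (fun s hs => hnonneg s (hsub hs)) (fun s hs => hineq s (hsub hs))
      _ ≤ a + 2 * a * (b * k) * √T + π * (b * k) ^ 2 * ∫ s in (0:ℝ)..t, f s := by
          rw [sub_zero]
          gcongr
          exact ht.2
      _ = (a + 2 * a * b * k * √T) + π * b ^ 2 * k ^ 2 * ∫ s in (0:ℝ)..t, f s := by ring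
  intro t ht
  simpa using IntegrableOn.le_mul_exp_of_le_add_mul_integral (by positivity) hint hbound t ht

theorem stmt_4 (T a b k : ℝ) (hT : 0 < T) (ha : 0 < a) (hb : 0 < b) (hk : 0 < k)
    (f : ℝ → ℝ)
    (hint : IntegrableOn f (Set.Icc 0 T) volume)
    (hnonneg : ∀ t ∈ Set.Icc (0:ℝ) T, 0 ≤ f t)
    (hineq : ∀ t ∈ Set.Icc (0:ℝ) T,
      f t ≤ a + b * k * ∫ s in (0:ℝ)..t, f s / Real.sqrt (t - s)) :
    ∀ t ∈ Set.Icc (0:ℝ) T,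
      f t ≤ (a + 2 * a * b * k * Real.sqrt T) * Real.exp (Real.pi * b ^ 2 * k ^ 2 * t) :=
  stmt_4_general T a b k ha hb hk f hint hnonneg hineq
end

section
/- Let L > 0, t > 0, and x, y ∈ (0, L). Set ε := min{x, y, L−x, L−y}. Then p_D(t, x, y) ≥ (1 − 2·exp(−ε²/t))·p(t, x, y). -/
noncomputable def pD (L t x y : ℝ) : ℝ :=
  (∑' n : ℤ, (Real.exp (-(x - y - 2 * (n : ℝ) * L) ^ 2 / (4 * t))
      - Real.exp (-(x + y - 2 * (n : ℝ) * L) ^ 2 / (4 * t)))) / Real.sqrt (4 * Real.pi * t)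

noncomputable def pG (t x y : ℝ) : ℝ :=
  Real.exp (-(x - y) ^ 2 / (4 * t)) / Real.sqrt (4 * Real.pi * t)

lemma summable_gauss (L t c : ℝ) (hL : 0 < L) (ht : 0 < t) :
    Summable fun n : ℤ => Real.exp (-(c - 2 * (n : ℝ) * L) ^ 2 / (4 * t)) := by
  have hπ := Real.pi_pos
  have hT : 0 < L ^ 2 / (Real.pi * t) := by positivity
  have h := summable_pow_mul_jacobiTheta₂_term_bound (|c| * L / (2 * Real.pi * t)) hT 0
  simp only [pow_zero, one_mul] at h
  refine h.of_nonneg_of_le (fun n => (Real.exp_pos _).le) (fun n => ?_)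
  rw [Real.exp_le_exp]
  have hn : (n : ℝ) * c ≤ |(n : ℝ)| * |c| :=
    (le_abs_self _).trans (le_of_eq (abs_mul _ _))
  have hrhs : -Real.pi * (L ^ 2 / (Real.pi * t) * (n : ℝ) ^ 2
      - 2 * (|c| * L / (2 * Real.pi * t)) * |(n : ℤ)|)
      = (-(L ^ 2) * (n : ℝ) ^ 2 + |c| * L * |(n : ℝ)|) / t := by
    push_cast
    field_simp
    ring
  rw [hrhs, div_le_div_iff₀ (by positivity) ht]
  have habs : 0 ≤ |(n : ℝ)| := abs_nonneg _
  have hc : 0 ≤ |c| := abs_nonneg _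
  nlinarith [mul_le_mul_of_nonneg_right (mul_le_mul_of_nonneg_right hn hL.le) ht.le,
    mul_nonneg (sq_nonneg c) ht.le]

lemma aux_exp (t e2 A B : ℝ) (ht : 0 < t) (h : B + 4 * e2 ≤ A) :
    Real.exp (-A / (4 * t)) ≤ Real.exp (-e2 / t) * Real.exp (-B / (4 * t)) := by
  rw [← Real.exp_add, Real.exp_le_exp]
  have h4 : (0 : ℝ) < 4 * t := by linarith
  have he : -e2 / t + -B / (4 * t) = (-(4 * e2) - B) / (4 * t) := by
    field_simp; ring
  rw [he, div_le_div_iff₀ h4 h4]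
  nlinarith

theorem stmt_9 (L t x y : ℝ) (hL : 0 < L) (ht : 0 < t)
    (hx : x ∈ Set.Ioo 0 L) (hy : y ∈ Set.Ioo 0 L) :
    pD L t x y ≥ (1 - 2 * Real.exp (-(min (min x y) (min (L - x) (L - y))) ^ 2 / t)) * pG t x y := by
  obtain ⟨hx0, hxL⟩ := hx
  obtain ⟨hy0, hyL⟩ := hy
  set f : ℤ → ℝ := fun n => Real.exp (-(x - y - 2 * (n : ℝ) * L) ^ 2 / (4 * t)) with hfdef
  set g : ℤ → ℝ := fun n => Real.exp (-(x + y - 2 * (n : ℝ) * L) ^ 2 / (4 * t)) with hgdef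
  have hf : Summable f := summable_gauss L t (x - y) hL ht
  have hg : Summable g := summable_gauss L t (x + y) hL ht
  set ε := min (min x y) (min (L - x) (L - y)) with hεdef
  have hε0 : 0 < ε := lt_min (lt_min hx0 hy0) (lt_min (by linarith) (by linarith))
  have hεx : ε ≤ x := (min_le_left _ _).trans (min_le_left _ _)
  have hεy : ε ≤ y := (min_le_left _ _).trans (min_le_right _ _)
  have hεLx : ε ≤ L - x := (min_le_right _ _).trans (min_le_left _ _)
  have hεLy : ε ≤ L - y := (min_le_right _ _).trans (min_le_right _ _)
  set E := Real.exp (-ε ^ 2 / t) with hEdef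
  -- the two dominant negative terms
  have hg0 : g 0 ≤ E * f 0 := by
    simp only [hgdef, hfdef, hEdef, Int.cast_zero]
    apply aux_exp t (ε ^ 2) _ _ ht
    nlinarith [mul_le_mul hεx hεy hε0.le hx0.le]
  have hg1 : g 1 ≤ E * f 0 := by
    simp only [hgdef, hfdef, hEdef, Int.cast_zero, Int.cast_one]
    apply aux_exp t (ε ^ 2) _ _ ht
    nlinarith [mul_le_mul hεLx hεLy hε0.le (by linarith : (0:ℝ) ≤ L - x)]
  -- splitting the sums
  have h1 : ∑' n, f n = f 0 + ∑' n : ↑((({0} : Finset ℤ) : Set ℤ)ᶜ), f n := by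
    rw [← Summable.sum_add_tsum_compl (s := ({0} : Finset ℤ)) hf]
    simp
  have h2 : ∑' n, g n = (g 0 + g 1) + ∑' n : ↑((({0, 1} : Finset ℤ) : Set ℤ)ᶜ), g n := by
    rw [← Summable.sum_add_tsum_compl (s := ({0, 1} : Finset ℤ)) hg]
    norm_num
  -- the pairing injection
  have key : (∑' n : ↑((({0, 1} : Finset ℤ) : Set ℤ)ᶜ), g n)
      ≤ ∑' n : ↑((({0} : Finset ℤ) : Set ℤ)ᶜ), f n := by
    have hmem : ∀ n : ↑((({0, 1} : Finset ℤ) : Set ℤ)ᶜ),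
        (if 2 ≤ (n : ℤ) then (n : ℤ) - 1 else (n : ℤ)) ∈ ((({0} : Finset ℤ) : Set ℤ)ᶜ) := by
      rintro ⟨n, hn⟩
      simp only [Finset.coe_insert, Finset.coe_singleton, Set.mem_compl_iff,
        Set.mem_insert_iff, Set.mem_singleton_iff, not_or] at hn ⊢
      split_ifs with h <;> omega
    set e : ↑((({0, 1} : Finset ℤ) : Set ℤ)ᶜ) → ↑((({0} : Finset ℤ) : Set ℤ)ᶜ) :=
      fun n => ⟨if 2 ≤ (n : ℤ) then (n : ℤ) - 1 else (n : ℤ), hmem n⟩ with hedef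
    have he : Function.Injective e := by
      rintro ⟨a, ha⟩ ⟨b, hb⟩ hab
      simp only [Finset.coe_insert, Finset.coe_singleton, Set.mem_compl_iff,
        Set.mem_insert_iff, Set.mem_singleton_iff, not_or] at ha hb
      simp only [hedef, Subtype.mk.injEq] at hab ⊢
      split_ifs at hab <;> omega
    refine Summable.tsum_le_tsum_of_inj e he (fun c _ => (Real.exp_pos _).le) ?_
      (hg.subtype _) (hf.subtype _)
    rintro ⟨n, hn⟩
    simp only [Finset.coe_insert, Finset.coe_singleton, Set.mem_compl_iff,
      Set.mem_insert_iff, Set.mem_singleton_iff, not_or] at hn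
    simp only [hedef, hgdef, hfdef]
    rw [Real.exp_le_exp]
    have h4t : (0 : ℝ) < 4 * t := by linarith
    apply div_le_div_of_nonneg_right ?_ h4t.le
    apply neg_le_neg
    by_cases hc : 2 ≤ n
    · rw [if_pos hc]
      have hc' : (2 : ℝ) ≤ (n : ℝ) := by exact_mod_cast hc
      push_cast
      nlinarith [mul_nonneg (by nlinarith : (0:ℝ) ≤ 2 * (n : ℝ) * L - L - x)
        (by linarith : (0:ℝ) ≤ L - y)]
    · rw [if_neg hc]
      have hn1 : n ≤ -1 := by omega
      have hc' : (n : ℝ) ≤ -1 := by exact_mod_cast hn1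
      nlinarith [mul_nonneg (by nlinarith : (0:ℝ) ≤ x - 2 * (n : ℝ) * L)
        (by linarith : (0:ℝ) ≤ y)]
  have hmain : (1 - 2 * E) * f 0 ≤ ∑' n : ℤ, (f n - g n) := by
    rw [Summable.tsum_sub hf hg, h1, h2]
    have : g 0 + g 1 ≤ 2 * E * f 0 := by linarith
    nlinarith [key]
  have hf0 : f 0 = Real.exp (-(x - y) ^ 2 / (4 * t)) := by
    simp [hfdef]
  have hpD : pD L t x y = (∑' n : ℤ, (f n - g n)) / Real.sqrt (4 * Real.pi * t) := rfl
  have hpG : pG t x y = f 0 / Real.sqrt (4 * Real.pi * t) := by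
    rw [pG, hf0]
  rw [ge_iff_le, hpD, hpG, mul_div_assoc']
  exact div_le_div_of_nonneg_right hmain (Real.sqrt_nonneg _)
end

section
/- Let L > 0 and 0 < ε < L/2. Then for all 0 < t ≤ ε²/log 4 and all x, y ∈ [ε, L−ε], one has p_D(t, x, y) ≥ (1/2)·p(t, x, y). -/
open Real

lemma gauss_summable {L t : ℝ} (hL : 0 < L) (ht : 0 < t) (c : ℝ) :
    Summable (fun n : ℤ => Real.exp (-(c - 2*(n:ℝ)*L)^2/(4*t))) := by
  have h := summable_pow_mul_jacobiTheta₂_term_bound (|c| * L / (2 * Real.pi * t))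
    (show (0:ℝ) < L^2/(Real.pi*t) by positivity) 0
  refine Summable.of_nonneg_of_le (fun n => (Real.exp_pos _).le) (fun n => ?_) h
  simp only [pow_zero, one_mul, Int.cast_abs]
  rw [Real.exp_le_exp]
  have hπ := Real.pi_pos
  set m := (n:ℝ)
  have hm : c * m ≤ |c| * |m| := le_trans (le_abs_self _) (le_of_eq (abs_mul c m))
  have expand : -Real.pi * ((L^2/(Real.pi*t)) * m^2 - 2*(|c| * L / (2 * Real.pi * t)) * |m|)
      = (-(L^2) * m^2 + |c| * L * |m|)/t := by field_simp; ring
  rw [expand, div_le_div_iff₀ (by positivity) ht]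
  nlinarith [mul_le_mul_of_nonneg_left hm (by positivity : (0:ℝ) ≤ 4*L*t), mul_nonneg (sq_nonneg c) ht.le]

set_option maxHeartbeats 1000000 in
theorem stmt_10 (L ε : ℝ) (hL : 0 < L) (hε : 0 < ε) (hεL : ε < L / 2) :
    ∀ t : ℝ, 0 < t → t ≤ ε ^ 2 / Real.log 4 →
      ∀ x ∈ Set.Icc ε (L - ε), ∀ y ∈ Set.Icc ε (L - ε),
        pD L t x y ≥ (1 / 2) * pG t x y := by
  intro t ht htε x hx y hy
  obtain ⟨hx1, hx2⟩ := hx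
  obtain ⟨hy1, hy2⟩ := hy
  set F : ℤ → ℝ := fun n => Real.exp (-(x - y - 2 * (n : ℝ) * L) ^ 2 / (4 * t)) with hF
  set G : ℤ → ℝ := fun n => Real.exp (-(x + y - 2 * (n : ℝ) * L) ^ 2 / (4 * t)) with hG
  -- summability
  have sF : Summable F := gauss_summable hL ht (x - y)
  have sG : Summable G := gauss_summable hL ht (x + y)
  have injN : Function.Injective (fun n : ℕ => (n : ℤ)) := Nat.cast_injective
  have injN1 : Function.Injective (fun n : ℕ => (n : ℤ) + 1) := by
    intro a b h; simp only at h; omega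
  have injN2 : Function.Injective (fun n : ℕ => (n : ℤ) + 2) := by
    intro a b h; simp only at h; omega
  have injNeg : Function.Injective (fun n : ℕ => -((n : ℤ) + 1)) := by
    intro a b h; simp only at h; omega
  have sFn : Summable (fun n : ℕ => F n) := sF.comp_injective injN
  have sGn : Summable (fun n : ℕ => G n) := sG.comp_injective injN
  have sFn1 : Summable (fun n : ℕ => F ((n : ℤ) + 1)) := sF.comp_injective injN1
  have sGn1 : Summable (fun n : ℕ => G ((n : ℤ) + 1)) := sG.comp_injective injN1
  have sGn2 : Summable (fun n : ℕ => G ((n : ℤ) + 2)) := sG.comp_injective injN2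
  have sFneg : Summable (fun n : ℕ => F (-((n : ℤ) + 1))) := sF.comp_injective injNeg
  have sGneg : Summable (fun n : ℕ => G (-((n : ℤ) + 1))) := sG.comp_injective injNeg
  -- termwise bounds
  have hy0 : 0 < y := lt_of_lt_of_le hε hy1
  have hx0 : 0 < x := lt_of_lt_of_le hε hx1
  have hεL' : 2 * ε < L := by linarith
  have hFGneg : ∀ n : ℕ, G (-((n : ℤ) + 1)) ≤ F (-((n : ℤ) + 1)) := by
    intro n
    simp only [hF, hG]
    rw [Real.exp_le_exp]
    have hn : (0:ℝ) ≤ n := Nat.cast_nonneg n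
    gcongr (- ?_) / (4 * t)
    push_cast
    nlinarith [mul_pos hy0 (show (0:ℝ) < x + 2 * ((n:ℝ) + 1) * L by nlinarith)]
  have hshift : ∀ n : ℕ, G ((n : ℤ) + 2) ≤ F ((n : ℤ) + 1) := by
    intro n
    simp only [hF, hG]
    rw [Real.exp_le_exp]
    have hn : (0:ℝ) ≤ n := Nat.cast_nonneg n
    gcongr (- ?_) / (4 * t)
    push_cast
    have hA : (0:ℝ) ≤ 2 * ((n:ℝ) + 1) * L - (x - y) := by nlinarith
    have hBA : (0:ℝ) ≤ (2 * ((n:ℝ) + 2) * L - (x + y)) - (2 * ((n:ℝ) + 1) * L - (x - y)) := by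
      nlinarith
    nlinarith [mul_nonneg hBA (by linarith :
      (0:ℝ) ≤ (2 * ((n:ℝ) + 2) * L - (x + y)) + (2 * ((n:ℝ) + 1) * L - (x - y)))]
  -- the two reflection terms are each at most F 0 / 4
  have hlog4 : 0 < Real.log 4 := Real.log_pos (by norm_num)
  have ht4 : t * Real.log 4 ≤ ε ^ 2 := (le_div_iff₀ hlog4).mp htε
  have hquarter : ∀ w : ℝ, ε ^ 2 ≤ w → Real.exp (-(w / t)) ≤ 1 / 4 := by
    intro w hw
    have h1 : Real.log 4 ≤ w / t := by
      rw [le_div_iff₀ ht]; nlinarith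
    calc Real.exp (-(w / t)) ≤ Real.exp (-(Real.log 4)) :=
          Real.exp_le_exp.mpr (by linarith)
      _ = 1 / 4 := by
          rw [Real.exp_neg, Real.exp_log (by norm_num : (0:ℝ) < 4)]; norm_num
  have hF0 : F 0 = Real.exp (-(x - y) ^ 2 / (4 * t)) := by
    simp only [hF, Int.cast_zero]; norm_num
  have hF0pos : 0 < F 0 := Real.exp_pos _
  have hG0 : G 0 ≤ 1 / 4 * F 0 := by
    have heq : G 0 = F 0 * Real.exp (-(x * y / t)) := by
      simp only [hF, hG]
      rw [← Real.exp_add]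
      congr 1
      push_cast
      field_simp
      ring
    rw [heq]
    calc F 0 * Real.exp (-(x * y / t)) ≤ F 0 * (1 / 4) := by
          gcongr
          exact hquarter _ (by nlinarith)
      _ = 1 / 4 * F 0 := by ring
  have hG1 : G 1 ≤ 1 / 4 * F 0 := by
    have heq : G 1 = F 0 * Real.exp (-((L - x) * (L - y) / t)) := by
      simp only [hF, hG]
      rw [← Real.exp_add]
      congr 1
      push_cast
      field_simp
      ring
    rw [heq]
    calc F 0 * Real.exp (-((L - x) * (L - y) / t)) ≤ F 0 * (1 / 4) := by
          gcongr
          exact hquarter _ (by nlinarith)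
      _ = 1 / 4 * F 0 := by ring
  -- main tsum estimate
  have key : F 0 - G 0 - G 1 ≤ ∑' n : ℤ, (F n - G n) := by
    rw [tsum_of_nat_of_neg_add_one (f := fun n : ℤ => F n - G n)
      (by exact sFn.sub sGn) (by exact sFneg.sub sGneg)]
    have hneg : 0 ≤ ∑' n : ℕ, (F (-((n : ℤ) + 1)) - G (-((n : ℤ) + 1))) :=
      tsum_nonneg fun n => sub_nonneg.mpr (hFGneg n)
    have hnat : F 0 - G 0 - G 1 ≤ ∑' n : ℕ, (F n - G n) := by
      rw [Summable.tsum_eq_zero_add (sFn.sub sGn)]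
      have cast1 : (fun n : ℕ => F ((n + 1 : ℕ)) - G ((n + 1 : ℕ)))
          = fun n : ℕ => F ((n : ℤ) + 1) - G ((n : ℤ) + 1) := by
        funext n; push_cast; rfl
      rw [cast1]
      have e1 : ∑' n : ℕ, (F ((n : ℤ) + 1) - G ((n : ℤ) + 1))
          = (∑' n : ℕ, F ((n : ℤ) + 1)) - ∑' n : ℕ, G ((n : ℤ) + 1) :=
        Summable.tsum_sub sFn1 sGn1
      have e2 : ∑' n : ℕ, G ((n : ℤ) + 1) = G 1 + ∑' n : ℕ, G ((n : ℤ) + 2) := by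
        rw [Summable.tsum_eq_zero_add sGn1]
        have : (fun n : ℕ => G ((n + 1 : ℕ) + 1)) = fun n : ℕ => G ((n : ℤ) + 2) := by
          funext n; push_cast; ring_nf
        rw [this]
        norm_num
      have e3 : 0 ≤ (∑' n : ℕ, F ((n : ℤ) + 1)) - ∑' n : ℕ, G ((n : ℤ) + 2) := by
        rw [← Summable.tsum_sub sFn1 sGn2]
        exact tsum_nonneg fun n => sub_nonneg.mpr (hshift n)
      have : F ((0 : ℕ) : ℤ) = F 0 := by norm_num
      rw [this]
      have : G ((0 : ℕ) : ℤ) = G 0 := by norm_num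
      rw [this]
      linarith
    linarith
  -- conclude
  have hs : 0 < Real.sqrt (4 * Real.pi * t) :=
    Real.sqrt_pos.mpr (by positivity)
  have hpD : pD L t x y = (∑' n : ℤ, (F n - G n)) / Real.sqrt (4 * Real.pi * t) := by
    simp only [pD, hF, hG]
  have hpG : pG t x y = Real.exp (-(x - y) ^ 2 / (4 * t)) / Real.sqrt (4 * Real.pi * t) := rfl
  rw [ge_iff_le, hpD, hpG,
    show 1 / 2 * (Real.exp (-(x - y) ^ 2 / (4 * t)) / Real.sqrt (4 * Real.pi * t))
      = (1 / 2 * Real.exp (-(x - y) ^ 2 / (4 * t))) / Real.sqrt (4 * Real.pi * t) from by ring]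
  gcongr
  rw [← hF0]
  linarith
end

section
/- Let L > 0 and 0 < ε < L/2. Then for all s with 0 < s ≤ ε²/(2·log 4), one has ∫_ε^{L−ε} p_D(2s, y, y) dy ≥ (L − 2ε)/(2·√(8πs)). -/
open Real

private lemma sumN' {c : ℝ} (hc : 0 < c) (d : ℝ) :
    Summable fun n : ℕ => Real.exp (-((n : ℝ) + d) ^ 2 * c) := by
  have h := HurwitzKernelBounds.summable_f_nat 0 d (t := c / π) (by positivity)
  refine h.congr fun n => ?_
  simp only [HurwitzKernelBounds.f_nat, pow_zero, one_mul]
  congr 1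
  have : (π : ℝ) ≠ 0 := pi_ne_zero
  field_simp

private lemma sumZ' {c : ℝ} (hc : 0 < c) (d : ℝ) :
    Summable fun n : ℤ => Real.exp (-((n : ℝ) + d) ^ 2 * c) := by
  refine Summable.of_nat_of_neg ?_ ?_
  · exact (sumN' hc d).congr fun n => by push_cast; ring_nf
  · refine (sumN' hc (-d)).congr fun n => ?_
    push_cast
    congr 1
    ring

private lemma sumFNat {L s : ℝ} (hL : 0 < L) (hs : 0 < s) (d : ℝ) :
    Summable fun k : ℕ => Real.exp (-(2 * ((k : ℝ) + d) * L) ^ 2 / (8 * s)) := by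
  refine (sumN' (c := L ^ 2 / (2 * s)) (by positivity) d).congr fun n => ?_
  congr 1
  field_simp
  ring

private lemma sumF {L s : ℝ} (hL : 0 < L) (hs : 0 < s) :
    Summable fun n : ℤ => Real.exp (-(2 * (n : ℝ) * L) ^ 2 / (8 * s)) := by
  refine (sumZ' (c := L ^ 2 / (2 * s)) (by positivity) 0).congr fun n => ?_
  congr 1
  field_simp
  ring

private lemma sumG {L s : ℝ} (hL : 0 < L) (hs : 0 < s) (y : ℝ) :
    Summable fun n : ℤ => Real.exp (-(2 * y - 2 * (n : ℝ) * L) ^ 2 / (8 * s)) := by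
  refine (sumZ' (c := L ^ 2 / (2 * s)) (by positivity) (-y / L)).congr fun n => ?_
  congr 1
  field_simp
  ring

private lemma A_eq {L s : ℝ} (hL : 0 < L) (hs : 0 < s) :
    (∑' n : ℤ, Real.exp (-(2 * (n : ℝ) * L) ^ 2 / (8 * s)))
      = 1 + 2 * ∑' k : ℕ, Real.exp (-(2 * ((k : ℝ) + 1) * L) ^ 2 / (8 * s)) := by
  have h0 := (tsum_nat_add_neg_add_one (sumF hL hs)).symm
  have h1 : ∀ k : ℕ,
      (Real.exp (-(2 * ((k : ℤ) : ℝ) * L) ^ 2 / (8 * s))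
        + Real.exp (-(2 * (((-(k + 1) : ℤ)) : ℝ) * L) ^ 2 / (8 * s)))
      = Real.exp (-(2 * ((k : ℝ) + 0) * L) ^ 2 / (8 * s))
        + Real.exp (-(2 * ((k : ℝ) + 1) * L) ^ 2 / (8 * s)) := by
    intro k
    push_cast
    congr 2 <;> ring
  rw [tsum_congr h1] at h0
  rw [h0, Summable.tsum_add (sumFNat hL hs 0) (sumFNat hL hs 1),
    Summable.tsum_eq_zero_add (sumFNat hL hs 0)]
  rw [tsum_congr (fun k : ℕ =>
    show Real.exp (-(2 * ((((k + 1) : ℕ) : ℝ) + 0) * L) ^ 2 / (8 * s))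
        = Real.exp (-(2 * ((k : ℝ) + 1) * L) ^ 2 / (8 * s)) by push_cast; ring_nf)]
  have h3 : Real.exp (-(2 * (((0 : ℕ) : ℝ) + 0) * L) ^ 2 / (8 * s)) = 1 := by norm_num
  rw [h3]
  ring

private lemma hmono' {s : ℝ} (hs : 0 < s) {u v : ℝ} (h : |v| ≤ |u|) :
    Real.exp (-u ^ 2 / (8 * s)) ≤ Real.exp (-v ^ 2 / (8 * s)) := by
  have hvu : v ^ 2 ≤ u ^ 2 := by
    rw [← sq_abs v, ← sq_abs u]
    exact pow_le_pow_left₀ (abs_nonneg v) h 2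
  apply Real.exp_le_exp.2
  rw [div_le_div_iff₀ (by positivity) (by positivity)]
  nlinarith [hs]

private lemma B_le {L s ε : ℝ} (hL : 0 < L) (hs : 0 < s) (hε : 0 < ε)
    (hq : ∀ u : ℝ, 2 * ε ≤ |u| → Real.exp (-u ^ 2 / (8 * s)) ≤ 1 / 4)
    (y : ℝ) (hy1 : ε ≤ y) (hy2 : y ≤ L - ε) :
    (∑' n : ℤ, Real.exp (-(2 * y - 2 * (n : ℝ) * L) ^ 2 / (8 * s)))
      ≤ 1 / 2 + 2 * ∑' k : ℕ, Real.exp (-(2 * ((k : ℝ) + 1) * L) ^ 2 / (8 * s)) := by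
  have hyL : y ≤ L := by linarith
  have h0 := (tsum_nat_add_neg_add_one (sumG hL hs y)).symm
  -- g k = exp(-(2y-2kL)²/8s) + exp(-(2y+2(k+1)L)²/8s)
  have h1 : ∀ k : ℕ,
      (Real.exp (-(2 * y - 2 * ((k : ℤ) : ℝ) * L) ^ 2 / (8 * s))
        + Real.exp (-(2 * y - 2 * (((-(k + 1) : ℤ)) : ℝ) * L) ^ 2 / (8 * s)))
      = Real.exp (-(2 * y - 2 * (k : ℝ) * L) ^ 2 / (8 * s))
        + Real.exp (-(2 * y + 2 * ((k : ℝ) + 1) * L) ^ 2 / (8 * s)) := by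
    intro k; push_cast; congr 2 <;> ring
  rw [tsum_congr h1] at h0
  set g : ℕ → ℝ := fun k => Real.exp (-(2 * y - 2 * (k : ℝ) * L) ^ 2 / (8 * s))
      + Real.exp (-(2 * y + 2 * ((k : ℝ) + 1) * L) ^ 2 / (8 * s)) with hg_def
  have hgsum : Summable g := by
    have := (sumG hL hs y).nat_add_neg_add_one
    exact this.congr h1
  rw [h0]
  rw [Summable.tsum_eq_zero_add hgsum, Summable.tsum_eq_zero_add ((summable_nat_add_iff 1).2 hgsum)]
  set T := ∑' k : ℕ, Real.exp (-(2 * ((k : ℝ) + 1) * L) ^ 2 / (8 * s)) with hT_def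
  -- tail bound
  have htail : (∑' k : ℕ, g (k + 1 + 1))
      ≤ ∑' k : ℕ, (Real.exp (-(2 * ((k : ℝ) + 1) * L) ^ 2 / (8 * s))
          + Real.exp (-(2 * ((k : ℝ) + 3) * L) ^ 2 / (8 * s))) := by
    refine Summable.tsum_le_tsum (fun k => ?_) ((summable_nat_add_iff 2).2 hgsum)
      ((sumFNat hL hs 1).add (sumFNat hL hs 3))
    have hk : (0:ℝ) ≤ (k : ℝ) := Nat.cast_nonneg k
    have hkL : 0 ≤ (k : ℝ) * L := mul_nonneg hk hL.le
    have e1 : Real.exp (-(2 * y - 2 * ((k + 1 + 1 : ℕ) : ℝ) * L) ^ 2 / (8 * s))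
        ≤ Real.exp (-(2 * ((k : ℝ) + 1) * L) ^ 2 / (8 * s)) := by
      apply hmono' hs
      push_cast
      rw [abs_of_nonneg (by linarith), abs_of_nonpos (by linarith)]
      linarith
    have e2 : Real.exp (-(2 * y + 2 * (((k + 1 + 1 : ℕ) : ℝ) + 1) * L) ^ 2 / (8 * s))
        ≤ Real.exp (-(2 * ((k : ℝ) + 3) * L) ^ 2 / (8 * s)) := by
      apply hmono' hs
      push_cast
      rw [abs_of_nonneg (by linarith), abs_of_nonneg (by linarith)]
      linarith
    show g (k + 1 + 1) ≤ _
    rw [hg_def]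
    push_cast
    push_cast at e1 e2
    exact add_le_add e1 e2
  have hT3 : T = Real.exp (-(2 * L) ^ 2 / (8 * s)) + Real.exp (-(4 * L) ^ 2 / (8 * s))
      + ∑' k : ℕ, Real.exp (-(2 * ((k : ℝ) + 3) * L) ^ 2 / (8 * s)) := by
    rw [hT_def, Summable.tsum_eq_zero_add (sumFNat hL hs 1),
      Summable.tsum_eq_zero_add ((summable_nat_add_iff 1).2 (sumFNat hL hs 1)),
      tsum_congr (fun k : ℕ =>
        show Real.exp (-(2 * (((k + 1 + 1 : ℕ) : ℝ) + 1) * L) ^ 2 / (8 * s))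
            = Real.exp (-(2 * ((k : ℝ) + 3) * L) ^ 2 / (8 * s)) by push_cast; ring_nf)]
    push_cast
    norm_num [add_assoc]
  have hadd : (∑' k : ℕ, (Real.exp (-(2 * ((k : ℝ) + 1) * L) ^ 2 / (8 * s))
          + Real.exp (-(2 * ((k : ℝ) + 3) * L) ^ 2 / (8 * s))))
      = T + ∑' k : ℕ, Real.exp (-(2 * ((k : ℝ) + 3) * L) ^ 2 / (8 * s)) := by
    rw [Summable.tsum_add (sumFNat hL hs 1) (sumFNat hL hs 3), hT_def]
  -- head bounds
  have hg0 : g 0 ≤ 1 / 4 + Real.exp (-(2 * L) ^ 2 / (8 * s)) := by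
    rw [hg_def]
    refine add_le_add ?_ ?_
    · apply hq
      rw [abs_of_nonneg (by push_cast; linarith)]
      push_cast; linarith
    · apply hmono' hs
      push_cast
      rw [abs_of_nonneg (by linarith), abs_of_nonneg (by linarith)]
      linarith
  have hg1 : g 1 ≤ 1 / 4 + Real.exp (-(4 * L) ^ 2 / (8 * s)) := by
    rw [hg_def]
    refine add_le_add ?_ ?_
    · apply hq
      rw [abs_of_nonpos (by push_cast; linarith)]
      push_cast; linarith
    · apply hmono' hs
      push_cast
      rw [abs_of_nonneg (by linarith), abs_of_nonneg (by linarith)]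
      linarith
  have e01 : g (0 + 1) = g 1 := rfl
  rw [e01]
  linarith [hg0, hg1, htail, hadd, hT3]

private lemma repr' {L s : ℝ} (hL : 0 < L) (hs : 0 < s) (y : ℝ) :
    (∑' n : ℤ, (Real.exp (-(y - y - 2 * (n : ℝ) * L) ^ 2 / (4 * (2 * s)))
      - Real.exp (-(y + y - 2 * (n : ℝ) * L) ^ 2 / (4 * (2 * s))))) / Real.sqrt (4 * Real.pi * (2 * s))
    = ((∑' n : ℤ, Real.exp (-(2 * (n : ℝ) * L) ^ 2 / (8 * s)))
        - ∑' n : ℤ, Real.exp (-(2 * y - 2 * (n : ℝ) * L) ^ 2 / (8 * s))) / Real.sqrt (8 * π * s) := by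
  have h1 : ∀ n : ℤ, (Real.exp (-(y - y - 2 * (n : ℝ) * L) ^ 2 / (4 * (2 * s)))
      - Real.exp (-(y + y - 2 * (n : ℝ) * L) ^ 2 / (4 * (2 * s))))
      = Real.exp (-(2 * (n : ℝ) * L) ^ 2 / (8 * s))
        - Real.exp (-(2 * y - 2 * (n : ℝ) * L) ^ 2 / (8 * s)) := by
    intro n
    rw [show (-(y - y - 2 * (n : ℝ) * L) ^ 2 / (4 * (2 * s))) = -(2 * (n : ℝ) * L) ^ 2 / (8 * s) by ring,
      show (-(y + y - 2 * (n : ℝ) * L) ^ 2 / (4 * (2 * s))) = -(2 * y - 2 * (n : ℝ) * L) ^ 2 / (8 * s) by ring]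
  rw [tsum_congr h1, Summable.tsum_sub (sumF hL hs) (sumG hL hs y),
    show (4 * Real.pi * (2 * s)) = 8 * π * s by ring]

private lemma contB {L s : ℝ} (hL : 0 < L) (hs : 0 < s) :
    ContinuousOn (fun y : ℝ => ∑' n : ℤ, Real.exp (-(2 * y - 2 * (n : ℝ) * L) ^ 2 / (8 * s)))
      (Set.Icc 0 L) := by
  have hc : (0:ℝ) < L ^ 2 / (2 * s) := by positivity
  refine continuousOn_tsum (f := fun (n : ℤ) (y : ℝ) => Real.exp (-(2 * y - 2 * (n : ℝ) * L) ^ 2 / (8 * s)))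
    (u := fun n : ℤ => Real.exp (L ^ 2 / (2 * s)) * Real.exp (-(|(n : ℝ)| - 1) ^ 2 * (L ^ 2 / (2 * s))))
    (fun n => (Real.continuous_exp.comp (by fun_prop)).continuousOn) ?_ ?_
  · refine Summable.of_nat_of_neg ?_ ?_
    · refine ((sumN' hc (-1)).mul_left (Real.exp (L ^ 2 / (2 * s)))).congr fun n => ?_
      have : |((n : ℤ) : ℝ)| = (n : ℝ) := by
        rw [Int.cast_natCast, abs_of_nonneg (Nat.cast_nonneg n)]
      rw [this]
      ring_nf
    · refine ((sumN' hc (-1)).mul_left (Real.exp (L ^ 2 / (2 * s)))).congr fun n => ?_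
      have : |(((-(n : ℤ)) : ℤ) : ℝ)| = (n : ℝ) := by
        push_cast
        rw [abs_neg, abs_of_nonneg (Nat.cast_nonneg n)]
      rw [this]
      ring_nf
  · intro n y hy
    have hf : ‖(fun (n : ℤ) (y : ℝ) => Real.exp (-(2 * y - 2 * (n : ℝ) * L) ^ 2 / (8 * s))) n y‖
        = Real.exp (-(2 * y - 2 * (n : ℝ) * L) ^ 2 / (8 * s)) := by
      simp [Real.norm_eq_abs, abs_of_nonneg (Real.exp_pos _).le]
    rw [hf]
    show _ ≤ Real.exp (L ^ 2 / (2 * s)) * Real.exp (-(|(n : ℝ)| - 1) ^ 2 * (L ^ 2 / (2 * s)))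
    rw [← Real.exp_add]
    apply Real.exp_le_exp.2
    have key : ((|(n : ℝ)| - 1) ^ 2 - 1) * L ^ 2 ≤ (y - (n : ℝ) * L) ^ 2 := by
      have h1 : (n : ℝ) ≤ |(n : ℝ)| := le_abs_self _
      have h2 : 0 ≤ |(n : ℝ)| := abs_nonneg _
      nlinarith [sq_abs ((n : ℝ)), sq_nonneg y,
        mul_nonneg (mul_nonneg (sub_nonneg.2 h1) hL.le) hy.1,
        mul_nonneg (mul_nonneg h2 hL.le) (sub_nonneg.2 hy.2)]
    have e1 : -(2 * y - 2 * (n : ℝ) * L) ^ 2 / (8 * s) = -((y - (n : ℝ) * L) ^ 2 / (2 * s)) := by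
      field_simp
      ring
    have e2 : L ^ 2 / (2 * s) + -(|(n : ℝ)| - 1) ^ 2 * (L ^ 2 / (2 * s))
        = -((((|(n : ℝ)| - 1) ^ 2 - 1) * L ^ 2) / (2 * s)) := by
      field_simp
      ring
    rw [e1, e2, neg_le_neg_iff]
    exact div_le_div_of_nonneg_right key (by positivity)


theorem stmt_19 (L ε : ℝ) (hL : 0 < L) (hε : 0 < ε) (hεL : ε < L / 2) :
    ∀ s : ℝ, 0 < s → s ≤ ε ^ 2 / (2 * Real.log 4) →
      (∫ y in ε..(L - ε), pD L (2 * s) y y) ≥ (L - 2 * ε) / (2 * Real.sqrt (8 * Real.pi * s)) := by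
  intro s hs hs2
  have hεle : ε ≤ L - ε := by linarith
  have hlog4 : (0:ℝ) < Real.log 4 := Real.log_pos (by norm_num)
  rw [le_div_iff₀ (by positivity)] at hs2
  -- quarter bound
  have hq : ∀ u : ℝ, 2 * ε ≤ |u| → Real.exp (-u ^ 2 / (8 * s)) ≤ 1 / 4 := by
    intro u hu
    have h4 : (2 * ε) ^ 2 ≤ u ^ 2 := by
      rw [← sq_abs u]
      exact pow_le_pow_left₀ (by positivity) hu 2
    have : Real.exp (-u ^ 2 / (8 * s)) ≤ Real.exp (-Real.log 4) := by
      apply Real.exp_le_exp.2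
      rw [neg_div, neg_le_neg_iff, le_div_iff₀ (by positivity : (0:ℝ) < 8 * s)]
      nlinarith
    rw [Real.exp_neg, Real.exp_log (by norm_num : (0:ℝ) < 4)] at this
    linarith
  have hrep : ∀ y : ℝ, pD L (2 * s) y y
      = ((∑' n : ℤ, Real.exp (-(2 * (n : ℝ) * L) ^ 2 / (8 * s)))
        - ∑' n : ℤ, Real.exp (-(2 * y - 2 * (n : ℝ) * L) ^ 2 / (8 * s))) / Real.sqrt (8 * π * s) :=
    fun y => repr' hL hs y
  have hR : (0:ℝ) < Real.sqrt (8 * Real.pi * s) := Real.sqrt_pos.2 (by positivity)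
  -- pointwise lower bound on Icc
  have hptw : ∀ y ∈ Set.Icc ε (L - ε),
      1 / (2 * Real.sqrt (8 * Real.pi * s)) ≤ pD L (2 * s) y y := by
    intro y hy
    rw [hrep y]
    have hhalf : 1 / 2 ≤ (∑' n : ℤ, Real.exp (-(2 * (n : ℝ) * L) ^ 2 / (8 * s)))
        - ∑' n : ℤ, Real.exp (-(2 * y - 2 * (n : ℝ) * L) ^ 2 / (8 * s)) := by
      have hA := A_eq hL hs
      have hB := B_le hL hs hε hq y hy.1 hy.2
      linarith
    rw [show (1 : ℝ) / (2 * Real.sqrt (8 * Real.pi * s)) = (1 / 2) / Real.sqrt (8 * Real.pi * s) by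
      rw [div_div]]
    exact div_le_div_of_nonneg_right hhalf hR.le
  -- integrability
  have hcont : ContinuousOn (fun y => pD L (2 * s) y y) (Set.uIcc ε (L - ε)) := by
    rw [Set.uIcc_of_le hεle]
    have hsub : Set.Icc ε (L - ε) ⊆ Set.Icc 0 L := by
      intro x hx
      exact ⟨by linarith [hx.1], by linarith [hx.2]⟩
    have h1 : ContinuousOn (fun y =>
        ((∑' n : ℤ, Real.exp (-(2 * (n : ℝ) * L) ^ 2 / (8 * s)))
          - ∑' n : ℤ, Real.exp (-(2 * y - 2 * (n : ℝ) * L) ^ 2 / (8 * s)))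
          / Real.sqrt (8 * π * s)) (Set.Icc ε (L - ε)) :=
      (continuousOn_const.sub ((contB hL hs).mono hsub)).div_const _
    exact h1.congr fun y _ => hrep y
  have hint : IntervalIntegrable (fun y => pD L (2 * s) y y) MeasureTheory.volume ε (L - ε) :=
    hcont.intervalIntegrable
  have hmono := intervalIntegral.integral_mono_on hεle intervalIntegrable_const hint hptw
  rw [intervalIntegral.integral_const, smul_eq_mul] at hmono
  rw [ge_iff_le, show (L - 2 * ε) / (2 * Real.sqrt (8 * Real.pi * s))
      = (L - ε - ε) * (1 / (2 * Real.sqrt (8 * Real.pi * s))) by ring]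
  exact hmono
end
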